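/- arXiv:2312.10279 — 2 statements merged into one kernel-verified Lean document; each statement's English description precedes it below -/
import Mathlib

section
/- Let M be skew-symmetric and A satisfy AᵀM + MA = 0, with I − hA invertible. For one backward Euler step y⁺ defined by (I − hA)y⁺ = y, one has yᵀMy = (y⁺)ᵀMy⁺ + h²(y⁺)ᵀAᵀMAy⁺. -/
open Matrix

theorem backward_euler_charge (m : ℕ)
    (M A : Matrix (Fin m) (Fin m) ℝ)
    (hM : Mᵀ = -M) (hA : Aᵀ * M + M * A = 0)
    (h : ℝ) (hinv : IsUnit (1 - h • A))
    (y yplus : Fin m → ℝ) (hstep : (1 - h • A).mulVec yplus = y) :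
    y ⬝ᵥ M.mulVec y
      = yplus ⬝ᵥ M.mulVec yplus
        + h ^ 2 * (A.mulVec yplus ⬝ᵥ M.mulVec (A.mulVec yplus)) := by
  subst hstep
  have key : yplus ⬝ᵥ (Aᵀ * M + M * A).mulVec yplus = 0 := by
    rw [hA]; simp
  have cross : A.mulVec yplus ⬝ᵥ M.mulVec yplus
      + yplus ⬝ᵥ M.mulVec (A.mulVec yplus) = 0 := by
    have h1 : A.mulVec yplus ⬝ᵥ M.mulVec yplus
        = yplus ⬝ᵥ (Aᵀ * M).mulVec yplus := by
      simp [dotProduct_mulVec, vecMul_transpose, ← mulVec_mulVec]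
    rw [add_mulVec, dotProduct_add, ← h1] at key
    rw [mulVec_mulVec]
    linarith [key]
  have expand : (1 - h • A).mulVec yplus = yplus - h • A.mulVec yplus := by
    rw [sub_mulVec, one_mulVec, smul_mulVec]
  rw [expand]
  rw [Matrix.mulVec_sub, Matrix.mulVec_smul]
  rw [sub_dotProduct, dotProduct_sub, dotProduct_sub, smul_dotProduct,
    dotProduct_smul, dotProduct_smul, smul_dotProduct]
  simp only [smul_eq_mul]
  linear_combination -h * cross
end

section
/- Let C be a symmetric n̂×n̂ matrix commuting with I_n⊗R (R skew-symmetric of order d, n̂ = nd), and let ℰ = [[0, aI],[bC, 0]]. Then with P = (I − (h/2)ℰ)^{-1}(I + (h/2)ℰ) (assumed well-defined), one has Pᵀ(J⊗R)P = J⊗R, where J = [[0,I],[−I,0]]. -/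
open Matrix Kronecker

theorem midpoint_cayley_preserves_JR (n d : ℕ) (a b h : ℝ)
    (R : Matrix (Fin d) (Fin d) ℝ) (hR : Rᵀ = -R)
    (C : Matrix (Fin n × Fin d) (Fin n × Fin d) ℝ) (hC : Cᵀ = C)
    (hcomm : C * ((1 : Matrix (Fin n) (Fin n) ℝ) ⊗ₖ R)
           = ((1 : Matrix (Fin n) (Fin n) ℝ) ⊗ₖ R) * C)
    (E : Matrix ((Fin n × Fin d) ⊕ (Fin n × Fin d)) ((Fin n × Fin d) ⊕ (Fin n × Fin d)) ℝ)
    (hE : E = fromBlocks 0 (a • (1 : Matrix (Fin n × Fin d) (Fin n × Fin d) ℝ)) (b • C) 0)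
    (hinv : IsUnit (1 - (h / 2) • E)) :
    ((1 - (h / 2) • E)⁻¹ * (1 + (h / 2) • E))ᵀ *
        fromBlocks 0 ((1 : Matrix (Fin n) (Fin n) ℝ) ⊗ₖ R)
          (-((1 : Matrix (Fin n) (Fin n) ℝ) ⊗ₖ R)) 0 *
        ((1 - (h / 2) • E)⁻¹ * (1 + (h / 2) • E))
      = fromBlocks 0 ((1 : Matrix (Fin n) (Fin n) ℝ) ⊗ₖ R)
          (-((1 : Matrix (Fin n) (Fin n) ℝ) ⊗ₖ R)) 0 := by
  set M : Matrix (Fin n × Fin d) (Fin n × Fin d) ℝ :=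
    (1 : Matrix (Fin n) (Fin n) ℝ) ⊗ₖ R with hM
  set K := fromBlocks 0 M (-M) 0 with hK
  set F := (h / 2) • E with hF
  set A := 1 - F with hA
  set B := 1 + F with hB
  -- key algebraic identity : Eᵀ * K = -(K * E)
  have hEK : Eᵀ * K = -(K * E) := by
    rw [hE, hK]
    rw [Matrix.fromBlocks_transpose, Matrix.fromBlocks_multiply,
      Matrix.fromBlocks_multiply]
    simp only [Matrix.transpose_smul, hC, Matrix.transpose_one, Matrix.zero_mul,
      Matrix.mul_zero, add_zero, zero_add, Matrix.smul_mul, Matrix.mul_smul,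
      Matrix.one_mul, Matrix.mul_one, Matrix.mul_neg, Matrix.neg_mul]
    rw [hcomm]
    simp [Matrix.fromBlocks_neg, smul_neg]
  have hFK : Fᵀ * K = -(K * F) := by
    rw [hF, Matrix.transpose_smul, Matrix.smul_mul, hEK, Matrix.mul_smul, smul_neg]
  have hAK : Aᵀ * K = K * B := by
    rw [hA, hB, Matrix.transpose_sub, Matrix.transpose_one, Matrix.sub_mul,
      Matrix.one_mul, hFK, Matrix.mul_add, Matrix.mul_one, sub_neg_eq_add]
  have hBK : Bᵀ * K = K * A := by
    rw [hA, hB, Matrix.transpose_add, Matrix.transpose_one, Matrix.add_mul,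
      Matrix.one_mul, hFK, Matrix.mul_sub, Matrix.mul_one, ← sub_eq_add_neg]
  have hAd : IsUnit A.det := (Matrix.isUnit_iff_isUnit_det A).mp hinv
  have hAinv : A⁻¹ * A = 1 := Matrix.nonsing_inv_mul A hAd
  have hAinv' : A * A⁻¹ = 1 := Matrix.mul_nonsing_inv A hAd
  have hAtd : IsUnit Aᵀ.det := by rwa [Matrix.det_transpose]
  have hAtinv : Aᵀ⁻¹ * Aᵀ = 1 := Matrix.nonsing_inv_mul Aᵀ hAtd
  have hcommAB : A * B = B * A := by
    rw [hA, hB]; noncomm_ring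
  have hABcomm : A⁻¹ * B = B * A⁻¹ := by
    calc A⁻¹ * B = A⁻¹ * B * (A * A⁻¹) := by rw [hAinv', Matrix.mul_one]
    _ = A⁻¹ * (B * A) * A⁻¹ := by simp only [Matrix.mul_assoc]
    _ = A⁻¹ * (A * B) * A⁻¹ := by rw [hcommAB]
    _ = B * A⁻¹ := by rw [← Matrix.mul_assoc A⁻¹ A B, hAinv, Matrix.one_mul]
  calc (A⁻¹ * B)ᵀ * K * (A⁻¹ * B)
      = (B * A⁻¹)ᵀ * K * (B * A⁻¹) := by rw [hABcomm]
    _ = Aᵀ⁻¹ * (Bᵀ * K * B) * A⁻¹ := by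
        rw [Matrix.transpose_mul, Matrix.transpose_nonsing_inv]
        simp only [Matrix.mul_assoc]
    _ = Aᵀ⁻¹ * (K * A * B) * A⁻¹ := by rw [hBK]
    _ = Aᵀ⁻¹ * (K * B * A) * A⁻¹ := by
        simp only [Matrix.mul_assoc]
        rw [← Matrix.mul_assoc A, ← Matrix.mul_assoc B A, hcommAB]
    _ = Aᵀ⁻¹ * (Aᵀ * K * A) * A⁻¹ := by rw [hAK]
    _ = K := by
        simp only [Matrix.mul_assoc]
        rw [← Matrix.mul_assoc Aᵀ⁻¹, hAtinv, Matrix.one_mul,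
          ← Matrix.mul_assoc K, Matrix.mul_assoc, hAinv', Matrix.mul_one]
end
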